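/- Let M be a compact metric space, φ:ℝ×M→M a continuous flow without fixed points, and ε₀(φ) = inf({τ>0 : ∃x∈M with φ_τ(x)=x and φ_t(x)≠x for all t∈(0,τ)} ∪ {1}). Then there exist constants μ∈(0, ε₀(φ)/3) and δ>0 such that for every x∈M and every continuous curve α:[0,1]→B_δ(x) with α(0)=x and α(t)∈Orb(x,φ) for all t∈[0,1], one has α(t)∈{φ_s(x) : s∈[−μ,μ]} for all t∈[0,1]. -/

import Mathlib

/-!
Without fixed points, compactness bounds the periods of periodic orbits away from `0`, so
`ε₀ > 0`, and for `μ = ε₀ / 6` there is `c > 0` with `d(φ_s z, z) ≥ c` whenever `s ∈ [μ/2, μ]`.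
Averaging a bump of radius about `c / 2` around `x` over the backward orbit segment of length `μ`
gives a continuous function `T` with `T (φ_t z) = T z + t` for `z` near `x` and small `t ≥ 0`:
the segment gains a piece near `x` and loses one that the separation keeps away from `x`.
Flowing a curve `α` in the orbit of `x` by time `T x - T (α t)` moves it into the level set
`{T = T x}`, which meets the orbit of `x` near `x` only at a uniformly discrete, hence countable,
set of times. A connected curve in a countable set is constant, so `α t = φ_s x` with `s` small.
-/

open Filter Topology Set

theorem Real.exists_continuous_eq_one_eq_zero {a b : ℝ} (hab : a < b) :
    ∃ g : ℝ → ℝ, Continuous g ∧ (∀ d ≤ a, g d = 1) ∧ ∀ d, b ≤ d → g d = 0 := by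
  refine ⟨fun d => Real.smoothTransition ((b - d) / (b - a)), by fun_prop, fun d hd => ?_,
    fun d hd => ?_⟩
  · exact Real.smoothTransition.one_of_one_le ((one_le_div (by linarith)).2 (by linarith))
  · exact Real.smoothTransition.zero_of_nonpos
      (div_nonpos_of_nonpos_of_nonneg (by linarith) (by linarith))

namespace Flow

section Group

variable {τ α : Type*} [TopologicalSpace τ] [AddGroup τ] [TopologicalSpace α] (ϕ : Flow τ α)

theorem neg_apply_apply (t : τ) (x : α) : ϕ (-t) (ϕ t x) = x := by
  rw [← ϕ.map_add, neg_add_cancel, ϕ.map_zero_apply]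

def periods (x : α) : AddSubgroup τ := @AddAction.stabilizer τ α _ ϕ.toAddAction x

theorem mem_periods {x : α} {t : τ} : t ∈ ϕ.periods x ↔ ϕ t x = x := Iff.rfl

end Group

section Compact

variable {τ α : Type*} [TopologicalSpace τ] [AddZero τ] [MetricSpace α] [CompactSpace α]
  (ϕ : Flow τ α)

theorem eventually_forall_dist_lt {ε : ℝ} (hε : 0 < ε) :
    ∀ᶠ t in 𝓝 0, ∀ x, dist (ϕ t x) x < ε := by
  have := isCompact_univ.eventually_forall_of_forall_eventually (x₀ := (0 : τ))
    (P := fun t x => dist (ϕ t x) x < ε) fun x _ => by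
      have hc : Continuous fun p : τ × α => dist (ϕ p.1 p.2) p.2 := by fun_prop
      exact hc.continuousAt.eventually (gt_mem_nhds (by simpa using hε))
  simpa using this

theorem exists_pos_forall_exists_le_dist (h : ∀ x, ∃ t, ϕ t x ≠ x) :
    ∃ c > 0, ∀ x, ∃ t, c ≤ dist (ϕ t x) x := by
  obtain ⟨n, hn⟩ := isCompact_univ.elim_directed_cover
    (fun n : ℕ => {x : α | ∃ t, 1 / ((n : ℝ) + 1) < dist (ϕ t x) x})
    (fun n => by
      simp only [ofPred_exists]
      exact isOpen_iUnion fun t => isOpen_lt continuous_const (by fun_prop))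
    (fun x _ => by
      obtain ⟨t, ht⟩ := h x
      obtain ⟨n, hn⟩ := exists_nat_one_div_lt (dist_pos.2 ht)
      exact mem_iUnion.2 ⟨n, t, hn⟩)
    (Monotone.directed_le fun m n hmn x ⟨t, ht⟩ => ⟨t, lt_of_le_of_lt (by gcongr) ht⟩)
  exact ⟨1 / ((n : ℝ) + 1), by positivity, fun x => (hn (mem_univ x)).imp fun _ => le_of_lt⟩

theorem exists_pos_le_dist_of_forall_ne {K : Set τ} (hK : IsCompact K)
    (h : ∀ t ∈ K, ∀ x, ϕ t x ≠ x) :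
    ∃ c > 0, ∀ t ∈ K, ∀ x, c ≤ dist (ϕ t x) x := by
  obtain ⟨c, hc, hle⟩ := (hK.prod isCompact_univ).exists_forall_le'
    (f := fun p : τ × α => dist (ϕ p.1 p.2) p.2) (by fun_prop) (a := 0)
    fun p hp => dist_pos.2 (h p.1 hp.1 p.2)
  exact ⟨c, hc, fun t ht x => hle (t, x) ⟨ht, mem_univ x⟩⟩

end Compact

section Real

variable {α : Type*} [TopologicalSpace α] (ϕ : Flow ℝ α)

theorem exists_mem_Ico_apply_eq {x : α} {s : ℝ} (hs : 0 < s) (hx : ϕ s x = x) (t : ℝ) :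
    ∃ r ∈ Ico 0 s, ϕ t x = ϕ r x := by
  refine ⟨toIcoMod hs 0 t, toIcoMod_mem_Ico' hs t, ?_⟩
  have hn : toIcoDiv hs 0 t • s ∈ ϕ.periods x := zsmul_mem ((ϕ.mem_periods).2 hx) _
  conv_lhs => rw [← toIcoMod_add_toIcoDiv_zsmul hs 0 t, ϕ.map_add, (ϕ.mem_periods).1 hn]

def minimalPeriods : Set ℝ := {τ | 0 < τ ∧ ∃ x, ϕ τ x = x ∧ ∀ t ∈ Ioo 0 τ, ϕ t x ≠ x}

theorem exists_mem_minimalPeriods_le {m : ℝ} (hm : 0 < m) {x : α}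
    (hd : Disjoint (ϕ.periods x : Set ℝ) (Ioo 0 m)) {s : ℝ} (hs : 0 < s) (hx : ϕ s x = x) :
    ∃ p ∈ ϕ.minimalPeriods, p ≤ s := by
  have hbot : ϕ.periods x ≠ ⊥ := fun h => hs.ne' <| by
    simpa [h] using (ϕ.mem_periods).2 hx
  obtain ⟨p, ⟨hpx, hp⟩, hleast⟩ := AddSubgroup.exists_isLeast_pos hbot hm hd
  exact ⟨p, ⟨hp, x, hpx, fun t ht htx => (hleast ⟨htx, ht.1⟩).not_gt ht.2⟩,
    hleast ⟨(ϕ.mem_periods).2 hx, hs⟩⟩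

noncomputable def timeFn (h : α → ℝ) (μ : ℝ) (y : α) : ℝ := ∫ s in -μ..0, h (ϕ s y)

theorem continuous_timeFn {X : Type*} [TopologicalSpace X] {h : X → α → ℝ}
    (hh : Continuous (Function.uncurry h)) (μ : ℝ) :
    Continuous fun p : X × α => ϕ.timeFn (h p.1) μ p.2 :=
  intervalIntegral.continuous_parametric_intervalIntegral_of_continuous'
    (f := fun (p : X × α) s => h p.1 (ϕ s p.2)) (by fun_prop) _ _

theorem timeFn_apply {h : α → ℝ} (hh : Continuous h) {μ t : ℝ} {z : α}
    (h1 : ∀ r ∈ uIcc 0 t, h (ϕ r z) = 1) (h0 : ∀ r ∈ uIcc (-μ) (t - μ), h (ϕ r z) = 0) :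
    ϕ.timeFn h μ (ϕ t z) = ϕ.timeFn h μ z + t := by
  have hi : ∀ a b : ℝ, IntervalIntegrable (fun r => h (ϕ r z)) MeasureTheory.volume a b :=
    fun a b => (by fun_prop : Continuous fun r => h (ϕ r z)).intervalIntegrable a b
  simp only [timeFn, ← ϕ.map_add]
  rw [intervalIntegral.integral_comp_add_right (fun r => h (ϕ r z)), neg_add_eq_sub, zero_add,
    ← intervalIntegral.integral_add_adjacent_intervals (hi _ (-μ)) (hi _ _),
    ← intervalIntegral.integral_add_adjacent_intervals (hi (-μ) 0) (hi 0 t),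
    intervalIntegral.integral_symm, intervalIntegral.integral_congr h0,
    intervalIntegral.integral_congr h1]
  simp

variable {T : α → ℝ} {U : Set α} {a : ℝ}

theorem apply_eq_add_of_abs_le (hT : ∀ z ∈ U, ∀ t ∈ Icc 0 a, T (ϕ t z) = T z + t) {z : α}
    (hz : z ∈ U) {t : ℝ} (ht : |t| ≤ a) (htz : ϕ t z ∈ U) : T (ϕ t z) = T z + t := by
  rcases le_total 0 t with h | h
  · exact hT z hz t ⟨h, (le_abs_self t).trans ht⟩
  · have := hT (ϕ t z) htz (-t) ⟨neg_nonneg.2 h, (neg_le_abs t).trans ht⟩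
    rw [ϕ.neg_apply_apply] at this
    linarith

theorem countable_setOf_apply_mem (ha : 0 < a)
    (hT : ∀ z ∈ U, ∀ t ∈ Icc 0 a, T (ϕ t z) = T z + t) (x : α) (c : ℝ) :
    {b | ϕ b x ∈ U ∧ T (ϕ b x) = c}.Countable := by
  refine (mapsTo_univ (fun b => ⌊b / a⌋) _).countable_of_injOn (fun b hb b' hb' hbb' => ?_)
    countable_univ
  have hlt : |b - b'| < a := by
    have := Int.abs_sub_lt_one_of_floor_eq_floor hbb'
    rwa [← sub_div, abs_div, abs_of_pos ha, div_lt_one ha] at this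
  have hb'b : ϕ (b - b') (ϕ b' x) = ϕ b x := by rw [← ϕ.map_add, sub_add_cancel]
  have := ϕ.apply_eq_add_of_abs_le hT hb'.1 hlt.le (hb'b ▸ hb.1)
  rw [hb'b, hb.2, hb'.2] at this
  linarith

end Real

section RealMetric

variable {α : Type*} [MetricSpace α] (ϕ : Flow ℝ α) {T : α → ℝ} {U : Set α} {a : ℝ}

theorem apply_sub_eq_of_mem_orbit (hTc : Continuous T) (ha : 0 < a)
    (hT : ∀ z ∈ U, ∀ t ∈ Icc 0 a, T (ϕ t z) = T z + t)
    {X : Type*} [TopologicalSpace X] {S : Set X} (hS : IsPreconnected S) {γ : X → α}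
    (hγ : ContinuousOn γ S) {t₀ : X} (ht₀ : t₀ ∈ S) {x : α} (hx : γ t₀ = x)
    (horb : ∀ t ∈ S, γ t ∈ ϕ.orbit x) (hγU : ∀ t ∈ S, γ t ∈ U)
    (hTγ : ∀ t ∈ S, |T (γ t) - T x| ≤ a) (hζU : ∀ t ∈ S, ϕ (T x - T (γ t)) (γ t) ∈ U) :
    ∀ t ∈ S, ϕ (T (γ t) - T x) x = γ t := by
  set ζ : X → α := fun t => ϕ (T x - T (γ t)) (γ t) with hζ
  have hζT : ∀ t ∈ S, T (ζ t) = T x := fun t ht => by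
    rw [ϕ.apply_eq_add_of_abs_le hT (hγU t ht)
      (by rw [abs_sub_comm]; exact hTγ t ht) (hζU t ht)]
    ring
  have hζD : ζ '' S ⊆ (ϕ · x) '' {b | ϕ b x ∈ U ∧ T (ϕ b x) = T x} := by
    rintro _ ⟨t, ht, rfl⟩
    obtain ⟨s, hs⟩ := (ϕ.mem_orbit_iff).1 (horb t ht)
    have hζs : ϕ (T x - T (γ t) + s) x = ζ t := by rw [ϕ.map_add, hs]
    exact ⟨_, ⟨hζs ▸ hζU t ht, hζs ▸ hζT t ht⟩, hζs⟩
  have hζc : ContinuousOn ζ S :=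
    ϕ.cont'.comp_continuousOn ((continuousOn_const.sub (hTc.comp_continuousOn hγ)).prodMk hγ)
  have hζx : ∀ t ∈ S, ζ t = x := fun t ht => by
    have := ((ϕ.countable_setOf_apply_mem ha hT x (T x)).image _).isTotallyDisconnected _ hζD
      (hS.image ζ hζc) (mem_image_of_mem ζ ht) (mem_image_of_mem ζ ht₀)
    rw [this, hζ]
    simp [hx]
  intro t ht
  calc ϕ (T (γ t) - T x) x = ϕ (-(T x - T (γ t))) (ζ t) := by rw [hζx t ht, neg_sub]
    _ = γ t := ϕ.neg_apply_apply _ _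

theorem timeFn_apply_eq_add_of_dist_lt {g : ℝ → ℝ} (hg : Continuous g) {ρ μ : ℝ}
    (hg1 : ∀ d ≤ 2 * ρ, g d = 1) (hg0 : ∀ d, 3 * ρ ≤ d → g d = 0)
    (hsep : ∀ s ∈ Icc (μ / 2) μ, ∀ z, 4 * ρ ≤ dist (ϕ s z) z)
    (hnear : ∀ r, |r| ≤ a → ∀ z, dist (ϕ r z) z < ρ) (haμ : a ≤ μ / 2) {x z : α}
    (hz : dist z x < ρ) {t : ℝ} (ht : t ∈ Icc 0 a) :
    ϕ.timeFn (fun y => g (dist y x)) μ (ϕ t z) = ϕ.timeFn (fun y => g (dist y x)) μ z + t := by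
  apply ϕ.timeFn_apply (by fun_prop)
  · intro r hr
    rw [uIcc_of_le ht.1] at hr
    have := hnear r (by rw [abs_of_nonneg hr.1]; exact hr.2.trans ht.2) z
    exact hg1 _ (by linarith [dist_triangle (ϕ r z) z x])
  · intro r hr
    rw [uIcc_of_le (by linarith [ht.1])] at hr
    have := hsep (-r) ⟨by linarith [hr.2, ht.2], by linarith [hr.1]⟩ (ϕ r z)
    rw [ϕ.neg_apply_apply] at this
    exact hg0 _ (by linarith [dist_triangle z x (ϕ r z), dist_comm x (ϕ r z)])

end RealMetric

section RealCompact

variable {α : Type*} [MetricSpace α] [CompactSpace α] (ϕ : Flow ℝ α)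

theorem exists_pos_forall_dist_lt {ε : ℝ} (hε : 0 < ε) :
    ∃ η > 0, ∀ t, |t| < η → ∀ x, dist (ϕ t x) x < ε := by
  obtain ⟨η, hη, h⟩ := Metric.eventually_nhds_iff.1 (ϕ.eventually_forall_dist_lt hε)
  exact ⟨η, hη, fun t ht => h (by rwa [Real.dist_0_eq_abs])⟩

theorem exists_pos_disjoint_periods (h : ∀ x, ∃ t, ϕ t x ≠ x) :
    ∃ m > 0, ∀ x, Disjoint (ϕ.periods x : Set ℝ) (Ioo 0 m) := by
  obtain ⟨c, hc, hfar⟩ := ϕ.exists_pos_forall_exists_le_dist h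
  obtain ⟨m, hm, hnear⟩ := ϕ.exists_pos_forall_dist_lt hc
  refine ⟨m, hm, fun x => Set.disjoint_left.2 fun s hx hs => ?_⟩
  -- a period `s < m` keeps the whole orbit `ϕ_{[0, s)} x` within `c` of `x`
  obtain ⟨t, ht⟩ := hfar x
  obtain ⟨r, hr, hrt⟩ := ϕ.exists_mem_Ico_apply_eq hs.1 ((ϕ.mem_periods).1 hx) t
  refine (hnear r ?_ x).not_ge (hrt ▸ ht)
  rw [abs_of_nonneg hr.1]
  exact hr.2.trans hs.2

theorem exists_pos_forall_curve_mem_orbit_segment {μ : ℝ} (hμ : 0 < μ)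
    (hper : ∀ s ∈ Icc (μ / 2) μ, ∀ z, ϕ s z ≠ z) {X : Type*} [TopologicalSpace X]
    {S : Set X} (hS : IsPreconnected S) {t₀ : X} (ht₀ : t₀ ∈ S) :
    ∃ δ > 0, ∀ x : α, ∀ γ : X → α, ContinuousOn γ S → (∀ t ∈ S, γ t ∈ Metric.ball x δ) →
      γ t₀ = x → (∀ t ∈ S, γ t ∈ ϕ.orbit x) → ∀ t ∈ S, ∃ s ∈ Icc (-μ) μ, ϕ s x = γ t := by
  obtain ⟨c, hc, hsep⟩ := ϕ.exists_pos_le_dist_of_forall_ne isCompact_Icc hper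
  obtain ⟨ρ, hρ, rfl⟩ : ∃ ρ > 0, c = 4 * ρ := ⟨c / 4, by positivity, by ring⟩
  obtain ⟨η, hη, hnear⟩ := ϕ.exists_pos_forall_dist_lt (half_pos hρ)
  set a := min (η / 2) (μ / 2)
  have ha : 0 < a := by positivity
  have haη : a < η := (min_le_left _ _).trans_lt (by linarith)
  have haμ : a ≤ μ / 2 := min_le_right _ _
  obtain ⟨g, hgc, hg1, hg0⟩ := Real.exists_continuous_eq_one_eq_zero (a := 2 * ρ) (b := 3 * ρ)
    (by linarith)
  set G : α × α → ℝ := fun p => ϕ.timeFn (fun y => g (dist y p.1)) μ p.2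
  have hGc : Continuous G := ϕ.continuous_timeFn (h := fun x y => g (dist y x)) (by fun_prop) μ
  -- uniform continuity on the compact `α × α` is what makes `δ` independent of `x`
  obtain ⟨δ, hδ, hδG⟩ :=
    Metric.uniformContinuous_iff.1 (CompactSpace.uniformContinuous_of_continuous hGc) a ha
  refine ⟨min δ (ρ / 2), by positivity, fun x γ hγ hball hx horb t ht => ?_⟩
  have hγx : ∀ t ∈ S, dist (γ t) x < δ ∧ dist (γ t) x < ρ / 2 := fun t ht =>
    lt_min_iff.1 (hball t ht)
  have hGγ : ∀ t ∈ S, |G (x, γ t) - G (x, x)| ≤ a := fun t ht => by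
    have := @hδG (x, γ t) (x, x) (by simpa [Prod.dist_eq] using (hγx t ht).1)
    exact (Real.dist_eq _ _ ▸ this).le
  refine ⟨G (x, γ t) - G (x, x), abs_le.1 ((hGγ t ht).trans (by linarith)),
    ϕ.apply_sub_eq_of_mem_orbit (T := fun y => G (x, y)) (U := Metric.ball x ρ)
      (hGc.comp (.prodMk_right x)) ha ?_ hS hγ ht₀ hx horb ?_ hGγ ?_ t ht⟩
  · intro z hz s hs
    exact ϕ.timeFn_apply_eq_add_of_dist_lt hgc hg1 hg0 hsep
      (fun r hr z => by linarith [hnear r (hr.trans_lt haη) z]) haμ hz hs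
  · exact fun t ht => Metric.mem_ball.2 (by linarith [(hγx t ht).2])
  · intro t ht
    have hu : |G (x, x) - G (x, γ t)| < η := by
      rw [abs_sub_comm]
      exact (hGγ t ht).trans_lt haη
    have := dist_triangle (ϕ (G (x, x) - G (x, γ t)) (γ t)) (γ t) x
    exact Metric.mem_ball.2 (by linarith [hnear _ hu (γ t), (hγx t ht).2])

end RealCompact

end Flow

/-- Constants `μ ∈ (0, ε₀/3)` and `δ > 0` such that any continuous curve
in `B_δ(x)` starting at `x` and contained in the orbit of `x` stays in `φ_{[−μ,μ]}(x)`. -/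
theorem stmt_9 {M : Type*} [MetricSpace M] [CompactSpace M]
    (φ : ℝ → M → M)
    (hφcont : Continuous fun p : ℝ × M => φ p.1 p.2)
    (hφ0 : ∀ x, φ 0 x = x)
    (hφadd : ∀ t s x, φ (t + s) x = φ t (φ s x))
    (hnofix : ∀ x : M, ∃ t : ℝ, φ t x ≠ x)
    (ε₀ : ℝ)
    (hε₀ : ε₀ = sInf ({τ : ℝ | 0 < τ ∧ ∃ x : M, φ τ x = x ∧ ∀ t ∈ Set.Ioo 0 τ, φ t x ≠ x}
      ∪ {1})) :
    ∃ μ ∈ Set.Ioo 0 (ε₀ / 3), ∃ δ > 0, ∀ x : M, ∀ α : ℝ → M,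
      ContinuousOn α (Set.Icc 0 1) →
      (∀ t ∈ Set.Icc (0:ℝ) 1, α t ∈ Metric.ball x δ) →
      α 0 = x →
      (∀ t ∈ Set.Icc (0:ℝ) 1, ∃ s : ℝ, φ s x = α t) →
      ∀ t ∈ Set.Icc (0:ℝ) 1, ∃ s ∈ Set.Icc (-μ) μ, φ s x = α t := by
  let ϕ : Flow ℝ M := ⟨φ, hφcont, hφadd, hφ0⟩
  change ε₀ = sInf (ϕ.minimalPeriods ∪ {1}) at hε₀
  obtain ⟨m, hm, hd⟩ := ϕ.exists_pos_disjoint_periods hnofix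
  have hbdd : BddBelow (ϕ.minimalPeriods ∪ {1}) :=
    ⟨0, by rintro τ (⟨hτ, -⟩ | rfl); exacts [hτ.le, zero_le_one]⟩
  have hε₀pos : 0 < ε₀ := by
    refine hε₀ ▸ (lt_min hm one_pos).trans_le (le_csInf ⟨1, Or.inr rfl⟩ ?_)
    rintro τ (⟨hτ, x, hx, -⟩ | rfl)
    · exact (min_le_left _ _).trans (not_lt.1 fun h => Set.disjoint_left.1 (hd x) hx ⟨hτ, h⟩)
    · exact min_le_right _ _
  have hper : ∀ s ∈ Icc (ε₀ / 6 / 2) (ε₀ / 6), ∀ z, ϕ s z ≠ z := by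
    intro s hs z hz
    obtain ⟨p, hp, hps⟩ := ϕ.exists_mem_minimalPeriods_le hm (hd z) (by linarith [hs.1]) hz
    linarith [hε₀ ▸ csInf_le hbdd (Or.inl hp), hs.2]
  obtain ⟨δ, hδ, hcurve⟩ := ϕ.exists_pos_forall_curve_mem_orbit_segment (by positivity) hper
    isPreconnected_Icc (left_mem_Icc.2 (zero_le_one (α := ℝ)))
  exact ⟨ε₀ / 6, ⟨by positivity, by linarith⟩, δ, hδ, hcurve⟩
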